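/- arXiv:1305.2764 — 2 statements merged into one kernel-verified Lean document; each statement's English description precedes it below -/
import Mathlib

section
/- Let G be a linearly ordered commutative group, X a set, and let K be a subgroup of the pointwise function group X → G that is a sublattice (closed under pointwise ⊔) and convex (f ≤ h ≤ g pointwise with f, g ∈ K implies h ∈ K). Let g : X → G, and suppose the principal kernel of g meets K trivially: the only h ∈ K satisfying ∃ n ∈ ℕ with |h(x)| ≤ |g(x)| ^ n for all x ∈ X is h = 1. Then Skel(K) ∪ Skel(g) = X, where Skel(K) := {x ∈ X | f(x) = 1 for all f ∈ K} and Skel(g) := {x ∈ X | g(x) = 1}. -/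
/-! If `f ∈ K` and `g` are both nontrivial at `x`, then so is `|f| ⊓ |g|`. It lies in `K` by
convexity, since `1 ≤ |f| ⊓ |g| ≤ |f| = f ⊔ f⁻¹ ∈ K`, and in the principal kernel of `g`, since it
is bounded by `|g|`; so it is a nontrivial element of the intersection. -/

section LinearOrderedCommGroup

variable {G : Type*} [CommGroup G] [LinearOrder G] [IsOrderedMonoid G]

theorem mabs_inf_mabs_le_mabs_right (a b : G) : |(|a|ₘ ⊓ |b|ₘ)|ₘ ≤ |b|ₘ := by
  rw [mabs_of_one_le (le_inf (one_le_mabs a) (one_le_mabs b))]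
  exact inf_le_right

theorem mabs_inf_mabs_eq_one {a b : G} (h : |a|ₘ ⊓ |b|ₘ = 1) : a = 1 ∨ b = 1 := by
  rcases min_choice |a|ₘ |b|ₘ with hab | hab
  · exact .inl (mabs_eq_one.mp (hab ▸ h))
  · exact .inr (mabs_eq_one.mp (hab ▸ h))

end LinearOrderedCommGroup

theorem mabs_mem_of_sup_mem {G X : Type*} [Group G] [Lattice G] {K : Subgroup (X → G)}
    (hsup : ∀ f ∈ K, ∀ g ∈ K, f ⊔ g ∈ K) {f : X → G} (hf : f ∈ K) : |f|ₘ ∈ K :=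
  hsup f hf f⁻¹ (K.inv_mem hf)

theorem mabs_inf_mem_of_convex {G X : Type*} [CommGroup G] [LinearOrder G] [IsOrderedMonoid G]
    {K : Subgroup (X → G)} (hsup : ∀ f ∈ K, ∀ g ∈ K, f ⊔ g ∈ K)
    (hconv : ∀ f g h : X → G, f ∈ K → g ∈ K → f ≤ h → h ≤ g → h ∈ K)
    {f : X → G} (hf : f ∈ K) (g : X → G) : |f|ₘ ⊓ |g|ₘ ∈ K :=
  hconv 1 |f|ₘ _ K.one_mem (mabs_mem_of_sup_mem hsup hf)
    (le_inf (one_le_mabs f) (one_le_mabs g)) inf_le_left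

/-- If a kernel `K` (a convex subgroup of the function group `X → G` closed under
pointwise `⊔`) meets the principal kernel of `g` trivially, then
`Skel K ∪ Skel g = X`. -/
theorem skel_union_eq_univ_of_trivial_inter {G X : Type*} [CommGroup G] [LinearOrder G] [IsOrderedMonoid G]
    (K : Subgroup (X → G))
    (hsup : ∀ f ∈ K, ∀ g ∈ K, f ⊔ g ∈ K)
    (hconv : ∀ f g h : X → G, f ∈ K → g ∈ K → f ≤ h → h ≤ g → h ∈ K)
    (g : X → G)
    (htriv : ∀ h ∈ K,
      (∃ n : ℕ, ∀ x : X, h x ⊔ (h x)⁻¹ ≤ (g x ⊔ (g x)⁻¹) ^ n) → h = 1) :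
    {x : X | ∀ f ∈ K, f x = 1} ∪ {x : X | g x = 1} = Set.univ := by
  refine Set.eq_univ_of_forall fun x => ?_
  by_contra hx
  simp only [Set.mem_union, Set.mem_ofPred_eq, not_or, not_forall] at hx
  obtain ⟨⟨f, hfK, hfx⟩, hgx⟩ := hx
  have hone : |f|ₘ ⊓ |g|ₘ = 1 :=
    htriv _ (mabs_inf_mem_of_convex hsup hconv hfK g)
      ⟨1, fun y => (pow_one |g y|ₘ).symm ▸ mabs_inf_mabs_le_mabs_right (f y) (g y)⟩
  exact (mabs_inf_mabs_eq_one (congr_fun hone x)).elim hfx hgx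
end

section
/- Let G be a linearly ordered commutative group and X a set. Let f : ι → (X → G) and g : κ → (X → G) be families indexed by finite nonempty types, with F(x) := max_i f_i(x) and H(x) := max_j g_j(x). Assume the pair (f, g) is corner-integral: for every x ∈ X, if x is a corner root of the family f then F(x) ≤ H(x), and if x is a corner root of the family g then H(x) ≤ F(x). Then the skeleton {x ∈ X | F(x) = H(x)} coincides with the corner locus of the combined family indexed by ι ⊕ κ. (Thus a corner-integral principal skeleton is exactly a principal corner locus, i.e. a supertropical hypersurface.) -/
/-- `x` is a corner root of the family `f` if two distinct members agree at `x` and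
dominate all other members there. -/
def IsCornerRoot {X A ι : Type*} [LinearOrder A] (f : ι → X → A) (x : X) : Prop :=
  ∃ i j : ι, i ≠ j ∧ f i x = f j x ∧ ∀ l : ι, f l x ≤ f i x

/-- The pointwise maximum of a finite nonempty family of functions. -/
def famSup {A X ι : Type*} [SemilatticeSup A] [Fintype ι] [Nonempty ι]
    (f : ι → X → A) (x : X) : A :=
  Finset.univ.sup' Finset.univ_nonempty fun i => f i x

/-! A corner root of the combined family is a point where the maximum `F ⊔ H` is attained by
two distinct members. If both belong to the same family, that family has a corner root there
and dominates the other one, so corner-integrality forces `F = H`; if one belongs to each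
family, then `F = H` outright. Conversely, when `F = H`, a maximizer of `f` and a maximizer
of `g` witness a corner root of the combined family. -/

section famSup

variable {A X ι κ : Type*} [LinearOrder A] [Fintype ι] [Nonempty ι] [Fintype κ] [Nonempty κ]
  (f : ι → X → A) (g : κ → X → A) (x : X)

theorem famSup_le_iff {a : A} : famSup f x ≤ a ↔ ∀ i, f i x ≤ a := by
  simp [famSup]

theorem le_famSup (i : ι) : f i x ≤ famSup f x :=
  Finset.le_sup' (fun i => f i x) (Finset.mem_univ i)

theorem exists_eq_famSup : ∃ i, f i x = famSup f x := by
  obtain ⟨i, -, hi⟩ := Finset.exists_mem_eq_sup' Finset.univ_nonempty fun i => f i x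
  exact ⟨i, hi.symm⟩

theorem famSup_sumElim : famSup (Sum.elim f g) x = famSup f x ⊔ famSup g x := by
  refine le_antisymm ((famSup_le_iff _ x).2 ?_) (sup_le ?_ ?_)
  · rintro (i | j)
    · exact (le_famSup f x i).trans le_sup_left
    · exact (le_famSup g x j).trans le_sup_right
  · exact (famSup_le_iff f x).2 fun i => le_famSup (Sum.elim f g) x (.inl i)
  · exact (famSup_le_iff g x).2 fun j => le_famSup (Sum.elim f g) x (.inr j)

theorem isCornerRoot_iff_exists_ne_eq_famSup :
    IsCornerRoot f x ↔ ∃ i j, i ≠ j ∧ f i x = famSup f x ∧ f j x = famSup f x := by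
  constructor
  · rintro ⟨i, j, hij, heq, hmax⟩
    have hi : f i x = famSup f x := le_antisymm (le_famSup f x i) ((famSup_le_iff f x).2 hmax)
    exact ⟨i, j, hij, hi, heq ▸ hi⟩
  · rintro ⟨i, j, hij, hi, hj⟩
    exact ⟨i, j, hij, hi.trans hj.symm, fun l => hi ▸ le_famSup f x l⟩

theorem apply_eq_famSup_sup_iff (i : ι) (b : A) :
    f i x = famSup f x ⊔ b ↔ f i x = famSup f x ∧ b ≤ famSup f x := by
  constructor
  · intro h
    have hb : b ≤ famSup f x := sup_le_iff.1 (h ▸ le_famSup f x i) |>.2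
    exact ⟨h.trans (sup_eq_left.2 hb), hb⟩
  · rintro ⟨h, hb⟩
    rw [sup_eq_left.2 hb, h]

theorem exists_ne_eq_famSup_sup_iff (b : A) :
    (∃ i i', i ≠ i' ∧ f i x = famSup f x ⊔ b ∧ f i' x = famSup f x ⊔ b) ↔
      IsCornerRoot f x ∧ b ≤ famSup f x := by
  simp only [apply_eq_famSup_sup_iff, isCornerRoot_iff_exists_ne_eq_famSup]
  constructor
  · rintro ⟨i, i', hne, ⟨hi, hb⟩, hi', -⟩
    exact ⟨⟨i, i', hne, hi, hi'⟩, hb⟩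
  · rintro ⟨⟨i, i', hne, hi, hi'⟩, hb⟩
    exact ⟨i, i', hne, ⟨hi, hb⟩, hi', hb⟩

theorem famSup_eq_famSup_iff_exists_eq_sup : famSup f x = famSup g x ↔
    ∃ i j, f i x = famSup f x ⊔ famSup g x ∧ g j x = famSup f x ⊔ famSup g x := by
  constructor
  · intro h
    obtain ⟨i, hi⟩ := exists_eq_famSup f x
    obtain ⟨j, hj⟩ := exists_eq_famSup g x
    exact ⟨i, j, by rw [hi, h, sup_idem], by rw [hj, h, sup_idem]⟩
  · rintro ⟨i, j, hi, hj⟩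
    exact le_antisymm (sup_le_iff.1 (hj ▸ le_famSup g x j)).1
      (sup_le_iff.1 (hi ▸ le_famSup f x i)).2

theorem isCornerRoot_sumElim_iff : IsCornerRoot (Sum.elim f g) x ↔
    (IsCornerRoot f x ∧ famSup g x ≤ famSup f x) ∨
      (IsCornerRoot g x ∧ famSup f x ≤ famSup g x) ∨ famSup f x = famSup g x := by
  rw [isCornerRoot_iff_exists_ne_eq_famSup, famSup_sumElim, ← exists_ne_eq_famSup_sup_iff,
    ← exists_ne_eq_famSup_sup_iff, sup_comm (famSup g x),
    famSup_eq_famSup_iff_exists_eq_sup]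
  simp only [Sum.exists, Sum.elim_inl, Sum.elim_inr, ne_eq, Sum.inl.injEq, Sum.inr.injEq]
  grind

end famSup

theorem corner_integral_skeleton_eq_corner_locus_general {A X : Type*}
    [LinearOrder A]
    {ι κ : Type*} [Fintype ι] [Nonempty ι] [Fintype κ] [Nonempty κ]
    (f : ι → X → A) (g : κ → X → A)
    (hf : ∀ x : X, IsCornerRoot f x → famSup f x ≤ famSup g x)
    (hg : ∀ x : X, IsCornerRoot g x → famSup g x ≤ famSup f x) :
    {x : X | famSup f x = famSup g x} = {x : X | IsCornerRoot (Sum.elim f g) x} := by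
  ext x
  rw [Set.mem_ofPred, Set.mem_ofPred, isCornerRoot_sumElim_iff]
  constructor
  · exact fun hskel => Or.inr (Or.inr hskel)
  · rintro (⟨hroot, hle⟩ | ⟨hroot, hle⟩ | hskel)
    · exact le_antisymm (hf x hroot) hle
    · exact le_antisymm hle (hg x hroot)
    · exact hskel

/-- For a corner-integral pair (numerator family `f`, denominator family `g`), the
skeleton `{F = H}` equals the corner locus of the combined family: a corner-integral
principal skeleton is exactly a principal corner locus (supertropical hypersurface). -/
theorem corner_integral_skeleton_eq_corner_locus {A X : Type*}
    [CommGroup A] [LinearOrder A] [IsOrderedMonoid A]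
    {ι κ : Type*} [Fintype ι] [Nonempty ι] [Fintype κ] [Nonempty κ]
    (f : ι → X → A) (g : κ → X → A)
    (hf : ∀ x : X, IsCornerRoot f x → famSup f x ≤ famSup g x)
    (hg : ∀ x : X, IsCornerRoot g x → famSup g x ≤ famSup f x) :
    {x : X | famSup f x = famSup g x} = {x : X | IsCornerRoot (Sum.elim f g) x} :=
  corner_integral_skeleton_eq_corner_locus_general f g hf hg
end
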